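/- No mixed 1-stack 1-queue layout of G_c contains four distinct twin pairs s_{i_m}, t_{i_m} (m = 1, 2, 3, 4, with s_{i_m} < t_{i_m} after possibly exchanging names within each pair) satisfying the vertex ordering pattern A < s_{i_m} < B < t_{i_m} for all m. -/
import Mathlib


/-- The vertices of the counterexample graph `G_c`: vertices `A`, `B`,
twins `s i`, `t i` for `i : Fin 19`, and connectors `x i j` for `j : Fin 7`. -/
inductive GcV : Type
  | A : GcV
  | B : GcV
  | s : Fin 19 → GcV
  | t : Fin 19 → GcV
  | x : Fin 19 → Fin 7 → GcV
  deriving DecidableEq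

/-- The edge set of the counterexample graph `G_c` (361 edges). -/
def GcEdges : Set (Sym2 GcV) :=
  {e | ∃ i : Fin 19,
    e = s(GcV.s i, GcV.t i) ∨
    e = s(GcV.A, GcV.s i) ∨ e = s(GcV.A, GcV.t i) ∨
    e = s(GcV.B, GcV.s i) ∨ e = s(GcV.B, GcV.t i) ∨
    ∃ j : Fin 7, e = s(GcV.s i, GcV.x i j) ∨ e = s(GcV.t i, GcV.x i j)}

/-- Two edges cross with respect to the vertex positions `pos`:
`L(e) < L(f) < R(e) < R(f)`. -/
def crossesAt (pos : GcV → ℕ) (e f : Sym2 GcV) : Prop :=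
  ∃ a b c d : GcV, e = s(a, c) ∧ f = s(b, d) ∧
    pos a < pos b ∧ pos b < pos c ∧ pos c < pos d

/-- Two edges nest with respect to the vertex positions `pos`:
`L(e) < L(f) < R(f) < R(e)`. -/
def nestsAt (pos : GcV → ℕ) (e f : Sym2 GcV) : Prop :=
  ∃ a b c d : GcV, e = s(a, d) ∧ f = s(b, c) ∧
    pos a < pos b ∧ pos b < pos c ∧ pos c < pos d

/-- A mixed 1-stack 1-queue layout of `G_c`: a linear order of the vertices
(given by an injective position function) and a partition of the edges into
a stack `S` (no two edges cross) and a queue `Q` (no two edges nest). -/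
structure GcMixedLayout where
  pos : GcV → ℕ
  inj : Function.Injective pos
  S : Set (Sym2 GcV)
  Q : Set (Sym2 GcV)
  union_eq : S ∪ Q = GcEdges
  disjoint : Disjoint S Q
  stack : ∀ e ∈ S, ∀ f ∈ S, ¬ crossesAt pos e f
  queue : ∀ e ∈ Q, ∀ f ∈ Q, ¬ nestsAt pos e f

section Aux

lemma Gc_mem_S_or_Q (L : GcMixedLayout) {e : Sym2 GcV} (he : e ∈ GcEdges) :
    e ∈ L.S ∨ e ∈ L.Q := by
  rw [← L.union_eq] at he; exact he

lemma Gc_cross_SS (L : GcMixedLayout) {a b c d : GcV}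
    (h1 : L.pos a < L.pos b) (h2 : L.pos b < L.pos c) (h3 : L.pos c < L.pos d)
    (he : s(a, c) ∈ L.S) (hf : s(b, d) ∈ L.S) : False :=
  L.stack _ he _ hf ⟨a, b, c, d, rfl, rfl, h1, h2, h3⟩

lemma Gc_nest_QQ (L : GcMixedLayout) {a b c d : GcV}
    (h1 : L.pos a < L.pos b) (h2 : L.pos b < L.pos c) (h3 : L.pos c < L.pos d)
    (he : s(a, d) ∈ L.Q) (hf : s(b, c) ∈ L.Q) : False :=
  L.queue _ he _ hf ⟨a, b, c, d, rfl, rfl, h1, h2, h3⟩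

lemma Gc_forceQ (L : GcMixedLayout) {e : Sym2 GcV} (he : e ∈ GcEdges)
    (h : e ∈ L.S → False) : e ∈ L.Q := (Gc_mem_S_or_Q L he).resolve_left h

lemma Gc_forceS (L : GcMixedLayout) {e : Sym2 GcV} (he : e ∈ GcEdges)
    (h : e ∈ L.Q → False) : e ∈ L.S := (Gc_mem_S_or_Q L he).resolve_right h

lemma Gc_SQ_false (L : GcMixedLayout) {e : Sym2 GcV} (hS : e ∈ L.S) (hQ : e ∈ L.Q) :
    False := Set.disjoint_left.mp L.disjoint hS hQ

lemma Gc_pos_ne (L : GcMixedLayout) {v w : GcV} (h : v ≠ w) : L.pos v ≠ L.pos w :=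
  fun he => h (L.inj he)

/-- A twin pair realizing the pattern `A < σ < B < τ`, together with the four
relevant core edges. -/
structure MPair (L : GcMixedLayout) where
  σ : GcV
  τ : GcV
  ef : s(σ, τ) ∈ GcEdges
  eg : s(GcV.A, τ) ∈ GcEdges
  eh : s(σ, GcV.B) ∈ GcEdges
  ek : s(GcV.B, τ) ∈ GcEdges
  h1 : L.pos GcV.A < L.pos σ
  h2 : L.pos σ < L.pos GcV.B
  h3 : L.pos GcV.B < L.pos τ

lemma Gc_twin_ne {i j : Fin 19} (hij : i ≠ j) {v w : GcV}
    (hv : v = GcV.s i ∨ v = GcV.t i) (hw : w = GcV.s j ∨ w = GcV.t j) : v ≠ w := by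
  rcases hv with rfl | rfl <;> rcases hw with rfl | rfl <;> simp [hij]

lemma Gc_mkPair (L : GcMixedLayout) (i : Fin 19)
    (h1 : L.pos GcV.A < min (L.pos (GcV.s i)) (L.pos (GcV.t i)))
    (h2 : min (L.pos (GcV.s i)) (L.pos (GcV.t i)) < L.pos GcV.B)
    (h3 : L.pos GcV.B < max (L.pos (GcV.s i)) (L.pos (GcV.t i))) :
    ∃ P : MPair L, (P.σ = GcV.s i ∨ P.σ = GcV.t i) ∧ (P.τ = GcV.s i ∨ P.τ = GcV.t i) := by
  rcases le_total (L.pos (GcV.s i)) (L.pos (GcV.t i)) with h | h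
  · rw [min_eq_left h] at h1 h2
    rw [max_eq_right h] at h3
    exact ⟨⟨GcV.s i, GcV.t i, ⟨i, Or.inl rfl⟩, ⟨i, Or.inr (Or.inr (Or.inl rfl))⟩,
      by rw [Sym2.eq_swap]; exact ⟨i, Or.inr (Or.inr (Or.inr (Or.inl rfl)))⟩,
      ⟨i, Or.inr (Or.inr (Or.inr (Or.inr (Or.inl rfl))))⟩,
      h1, h2, h3⟩, Or.inl rfl, Or.inr rfl⟩
  · rw [min_eq_right h] at h1 h2
    rw [max_eq_left h] at h3
    exact ⟨⟨GcV.t i, GcV.s i, by rw [Sym2.eq_swap]; exact ⟨i, Or.inl rfl⟩,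
      ⟨i, Or.inr (Or.inl rfl)⟩,
      by rw [Sym2.eq_swap]; exact ⟨i, Or.inr (Or.inr (Or.inr (Or.inr (Or.inl rfl))))⟩,
      ⟨i, Or.inr (Or.inr (Or.inr (Or.inl rfl)))⟩,
      h1, h2, h3⟩, Or.inr rfl, Or.inl rfl⟩

/-- Triple lemma: pairs `P1, P2` have smaller σ than `P3`, while `P2` has the
largest τ and in particular a larger τ than `P3`.  Contradiction. -/
lemma Gc_lemT (L : GcMixedLayout) (P1 P2 P3 : MPair L)
    (s13 : L.pos P1.σ < L.pos P3.σ) (s23 : L.pos P2.σ < L.pos P3.σ)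
    (t12 : L.pos P1.τ < L.pos P2.τ) (t32 : L.pos P3.τ < L.pos P2.τ)
    (t13 : L.pos P1.τ ≠ L.pos P3.τ) (s12 : L.pos P1.σ ≠ L.pos P2.σ) : False := by
  have a1 := P1.h1; have b1 := P1.h2; have c1 := P1.h3
  have a2 := P2.h1; have b2 := P2.h2; have c2 := P2.h3
  have a3 := P3.h1; have b3 := P3.h2; have c3 := P3.h3
  rcases lt_or_gt_of_ne t13 with hT | hT
  · -- τ1 < τ3
    rcases lt_or_gt_of_ne s12 with hS | hS
    · -- σ1 < σ2
      rcases Gc_mem_S_or_Q L P1.ef with hf1 | hf1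
      · have hf2 : s(P2.σ, P2.τ) ∈ L.Q :=
          Gc_forceQ L P2.ef (fun hf => Gc_cross_SS L hS (by omega) (by omega) hf1 hf)
        have hf3 : s(P3.σ, P3.τ) ∈ L.S :=
          Gc_forceS L P3.ef (fun hf => Gc_nest_QQ L s23 (by omega) (by omega) hf2 hf)
        exact Gc_cross_SS L s13 (by omega) (by omega) hf1 hf3
      · have hh2 : s(P2.σ, GcV.B) ∈ L.S :=
          Gc_forceS L P2.eh (fun hh => Gc_nest_QQ L hS (by omega) (by omega) hf1 hh)
        have hf3 : s(P3.σ, P3.τ) ∈ L.Q :=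
          Gc_forceQ L P3.ef (fun hf => Gc_cross_SS L s23 (by omega) (by omega) hh2 hf)
        have hf2 : s(P2.σ, P2.τ) ∈ L.S :=
          Gc_forceS L P2.ef (fun hf => Gc_nest_QQ L s23 (by omega) (by omega) hf hf3)
        have hg3 : s(GcV.A, P3.τ) ∈ L.Q :=
          Gc_forceQ L P3.eg (fun hg => Gc_cross_SS L (by omega) (by omega) (by omega) hg hf2)
        exact Gc_nest_QQ L (by omega) (by omega) (by omega) hg3 hf1
    · -- σ2 < σ1
      rcases Gc_mem_S_or_Q L P1.ef with hf1 | hf1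
      · have hh2 : s(P2.σ, GcV.B) ∈ L.Q :=
          Gc_forceQ L P2.eh (fun hh => Gc_cross_SS L hS (by omega) (by omega) hh hf1)
        have hg1 : s(GcV.A, P1.τ) ∈ L.S :=
          Gc_forceS L P1.eg (fun hg => Gc_nest_QQ L (by omega) (by omega) (by omega) hg hh2)
        have hf2 : s(P2.σ, P2.τ) ∈ L.Q :=
          Gc_forceQ L P2.ef (fun hf => Gc_cross_SS L (by omega) (by omega) (by omega) hg1 hf)
        have hf3 : s(P3.σ, P3.τ) ∈ L.S :=
          Gc_forceS L P3.ef (fun hf => Gc_nest_QQ L s23 (by omega) (by omega) hf2 hf)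
        exact Gc_cross_SS L s13 (by omega) (by omega) hf1 hf3
      · have hf2 : s(P2.σ, P2.τ) ∈ L.S :=
          Gc_forceS L P2.ef (fun hf => Gc_nest_QQ L hS (by omega) (by omega) hf hf1)
        have hg3 : s(GcV.A, P3.τ) ∈ L.Q :=
          Gc_forceQ L P3.eg (fun hg => Gc_cross_SS L (by omega) (by omega) (by omega) hg hf2)
        exact Gc_nest_QQ L (by omega) (by omega) (by omega) hg3 hf1
  · -- τ3 < τ1
    rcases Gc_mem_S_or_Q L P1.ef with hf1 | hf1
    · have hg3 : s(GcV.A, P3.τ) ∈ L.Q :=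
        Gc_forceQ L P3.eg (fun hg => Gc_cross_SS L (by omega) (by omega) (by omega) hg hf1)
      have hh1 : s(P1.σ, GcV.B) ∈ L.S :=
        Gc_forceS L P1.eh (fun hh => Gc_nest_QQ L (by omega) (by omega) (by omega) hg3 hh)
      have hf3 : s(P3.σ, P3.τ) ∈ L.Q :=
        Gc_forceQ L P3.ef (fun hf => Gc_cross_SS L s13 (by omega) (by omega) hh1 hf)
      have hg1 : s(GcV.A, P1.τ) ∈ L.S :=
        Gc_forceS L P1.eg (fun hg => Gc_nest_QQ L (by omega) (by omega) (by omega) hg hf3)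
      have hf2 : s(P2.σ, P2.τ) ∈ L.Q :=
        Gc_forceQ L P2.ef (fun hf => Gc_cross_SS L (by omega) (by omega) (by omega) hg1 hf)
      have hf3' : s(P3.σ, P3.τ) ∈ L.S :=
        Gc_forceS L P3.ef (fun hf => Gc_nest_QQ L s23 (by omega) (by omega) hf2 hf)
      exact Gc_SQ_false L hf3' hf3
    · have hf3 : s(P3.σ, P3.τ) ∈ L.S :=
        Gc_forceS L P3.ef (fun hf => Gc_nest_QQ L s13 (by omega) (by omega) hf1 hf)
      have hh2 : s(P2.σ, GcV.B) ∈ L.Q :=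
        Gc_forceQ L P2.eh (fun hh => Gc_cross_SS L s23 (by omega) (by omega) hh hf3)
      have hg3 : s(GcV.A, P3.τ) ∈ L.S :=
        Gc_forceS L P3.eg (fun hg => Gc_nest_QQ L (by omega) (by omega) (by omega) hg hh2)
      have hf2 : s(P2.σ, P2.τ) ∈ L.Q :=
        Gc_forceQ L P2.ef (fun hf => Gc_cross_SS L (by omega) (by omega) (by omega) hg3 hf)
      have hk1 : s(GcV.B, P1.τ) ∈ L.S :=
        Gc_forceS L P1.ek (fun hk => Gc_nest_QQ L (by omega) (by omega) (by omega) hf2 hk)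
      exact Gc_cross_SS L (by omega) (by omega) (by omega) hf3 hk1

lemma Gc_lemT' (L : GcMixedLayout) (P1 P2 P3 : MPair L)
    (s13 : L.pos P1.σ < L.pos P3.σ) (s23 : L.pos P2.σ < L.pos P3.σ)
    (ht : L.pos P3.τ < L.pos P1.τ ∨ L.pos P3.τ < L.pos P2.τ)
    (t12 : L.pos P1.τ ≠ L.pos P2.τ) (t13 : L.pos P1.τ ≠ L.pos P3.τ)
    (t23 : L.pos P2.τ ≠ L.pos P3.τ) (s12 : L.pos P1.σ ≠ L.pos P2.σ) : False := by
  rcases lt_or_gt_of_ne t12 with h | h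
  · have h2 : L.pos P3.τ < L.pos P2.τ := by rcases ht with h3 | h3 <;> omega
    exact Gc_lemT L P1 P2 P3 s13 s23 h h2 t13 s12
  · have h2 : L.pos P3.τ < L.pos P1.τ := by rcases ht with h3 | h3 <;> omega
    exact Gc_lemT L P2 P1 P3 s23 s13 h h2 t23 s12.symm

/-- Quadruple lemma: `σ1, σ2 < σ3 < σ4` and `τ1, τ2 < τ3 < τ4`. -/
lemma Gc_lemQ4 (L : GcMixedLayout) (P1 P2 P3 P4 : MPair L)
    (s13 : L.pos P1.σ < L.pos P3.σ) (s23 : L.pos P2.σ < L.pos P3.σ)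
    (s34 : L.pos P3.σ < L.pos P4.σ)
    (t13 : L.pos P1.τ < L.pos P3.τ) (t23 : L.pos P2.τ < L.pos P3.τ)
    (t34 : L.pos P3.τ < L.pos P4.τ)
    (t12 : L.pos P1.τ ≠ L.pos P2.τ) : False := by
  have a1 := P1.h1; have b1 := P1.h2; have c1 := P1.h3
  have a2 := P2.h1; have b2 := P2.h2; have c2 := P2.h3
  have a3 := P3.h1; have b3 := P3.h2; have c3 := P3.h3
  have a4 := P4.h1; have b4 := P4.h2; have c4 := P4.h3
  rcases lt_or_gt_of_ne t12 with hT | hT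
  · -- τ1 < τ2
    rcases Gc_mem_S_or_Q L P1.ef with hf1 | hf1
    · have hk2 : s(GcV.B, P2.τ) ∈ L.Q :=
        Gc_forceQ L P2.ek (fun hk => Gc_cross_SS L (by omega) (by omega) (by omega) hf1 hk)
      have hf3 : s(P3.σ, P3.τ) ∈ L.S :=
        Gc_forceS L P3.ef (fun hf => Gc_nest_QQ L (by omega) (by omega) (by omega) hf hk2)
      exact Gc_cross_SS L s13 (by omega) (by omega) hf1 hf3
    · have hh3 : s(P3.σ, GcV.B) ∈ L.S :=
        Gc_forceS L P3.eh (fun hh => Gc_nest_QQ L s13 (by omega) (by omega) hf1 hh)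
      have hf4 : s(P4.σ, P4.τ) ∈ L.Q :=
        Gc_forceQ L P4.ef (fun hf => Gc_cross_SS L s34 (by omega) (by omega) hh3 hf)
      have hk3 : s(GcV.B, P3.τ) ∈ L.S :=
        Gc_forceS L P3.ek (fun hk => Gc_nest_QQ L (by omega) (by omega) (by omega) hf4 hk)
      have hg2 : s(GcV.A, P2.τ) ∈ L.Q :=
        Gc_forceQ L P2.eg (fun hg => Gc_cross_SS L (by omega) (by omega) (by omega) hg hk3)
      exact Gc_nest_QQ L (by omega) (by omega) (by omega) hg2 hf1
  · -- τ2 < τ1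
    rcases Gc_mem_S_or_Q L P1.ef with hf1 | hf1
    · have hk3 : s(GcV.B, P3.τ) ∈ L.Q :=
        Gc_forceQ L P3.ek (fun hk => Gc_cross_SS L (by omega) (by omega) (by omega) hf1 hk)
      have hf4 : s(P4.σ, P4.τ) ∈ L.S :=
        Gc_forceS L P4.ef (fun hf => Gc_nest_QQ L (by omega) (by omega) (by omega) hf hk3)
      exact Gc_cross_SS L (by omega) (by omega) (by omega) hf1 hf4
    · have hh3 : s(P3.σ, GcV.B) ∈ L.S :=
        Gc_forceS L P3.eh (fun hh => Gc_nest_QQ L s13 (by omega) (by omega) hf1 hh)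
      have hf4 : s(P4.σ, P4.τ) ∈ L.Q :=
        Gc_forceQ L P4.ef (fun hf => Gc_cross_SS L s34 (by omega) (by omega) hh3 hf)
      have hk1 : s(GcV.B, P1.τ) ∈ L.S :=
        Gc_forceS L P1.ek (fun hk => Gc_nest_QQ L (by omega) (by omega) (by omega) hf4 hk)
      have hf2 : s(P2.σ, P2.τ) ∈ L.Q :=
        Gc_forceQ L P2.ef (fun hf => Gc_cross_SS L (by omega) (by omega) (by omega) hf hk1)
      have hg1 : s(GcV.A, P1.τ) ∈ L.S :=
        Gc_forceS L P1.eg (fun hg => Gc_nest_QQ L (by omega) (by omega) (by omega) hg hf2)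
      have hk3 : s(GcV.B, P3.τ) ∈ L.Q :=
        Gc_forceQ L P3.ek (fun hk => Gc_cross_SS L (by omega) (by omega) (by omega) hg1 hk)
      exact Gc_nest_QQ L (by omega) (by omega) (by omega) hf4 hk3

lemma Gc_comb3 (L : GcMixedLayout) (Pa Pb Pc Pd : MPair L)
    (sac : L.pos Pa.σ < L.pos Pc.σ) (sbc : L.pos Pb.σ < L.pos Pc.σ)
    (scd : L.pos Pc.σ < L.pos Pd.σ) (tcd : L.pos Pc.τ < L.pos Pd.τ)
    (sab : L.pos Pa.σ ≠ L.pos Pb.σ)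
    (tab : L.pos Pa.τ ≠ L.pos Pb.τ) (tac : L.pos Pa.τ ≠ L.pos Pc.τ)
    (tbc : L.pos Pb.τ ≠ L.pos Pc.τ) : False := by
  rcases lt_or_gt_of_ne tac with h | h
  · rcases lt_or_gt_of_ne tbc with h2 | h2
    · exact Gc_lemQ4 L Pa Pb Pc Pd sac sbc scd h h2 tcd tab
    · exact Gc_lemT' L Pa Pb Pc sac sbc (Or.inr h2) tab tac tbc sab
  · exact Gc_lemT' L Pa Pb Pc sac sbc (Or.inl h) tab tac tbc sab

lemma Gc_comb4 (L : GcMixedLayout) (P1 P2 P3 P4 : MPair L)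
    (s14 : L.pos P1.σ < L.pos P4.σ) (s24 : L.pos P2.σ < L.pos P4.σ)
    (s34 : L.pos P3.σ < L.pos P4.σ)
    (sne12 : L.pos P1.σ ≠ L.pos P2.σ) (sne13 : L.pos P1.σ ≠ L.pos P3.σ)
    (sne23 : L.pos P2.σ ≠ L.pos P3.σ)
    (t12 : L.pos P1.τ ≠ L.pos P2.τ) (t13 : L.pos P1.τ ≠ L.pos P3.τ)
    (t14 : L.pos P1.τ ≠ L.pos P4.τ) (t23 : L.pos P2.τ ≠ L.pos P3.τ)
    (t24 : L.pos P2.τ ≠ L.pos P4.τ) (t34 : L.pos P3.τ ≠ L.pos P4.τ) : False := by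
  rcases lt_or_gt_of_ne t14 with h1 | h1
  · rcases lt_or_gt_of_ne t24 with h2 | h2
    · rcases lt_or_gt_of_ne t34 with h3 | h3
      · -- τ1, τ2, τ3 < τ4 ; find the σ-max among P1 P2 P3
        rcases lt_or_gt_of_ne sne12 with g1 | g1
        · rcases lt_or_gt_of_ne sne23 with g2 | g2
          · exact Gc_comb3 L P1 P2 P3 P4 (by omega) g2 s34 h3 sne12 t12 t13 t23
          · exact Gc_comb3 L P1 P3 P2 P4 g1 g2 s24 h2 sne13 t13 t12 t23.symm
        · rcases lt_or_gt_of_ne sne13 with g2 | g2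
          · exact Gc_comb3 L P1 P2 P3 P4 g2 (by omega) s34 h3 sne12 t12 t13 t23
          · exact Gc_comb3 L P2 P3 P1 P4 g1 g2 s14 h1 sne23 t23 t12.symm t13.symm
      · exact Gc_lemT' L P1 P3 P4 s14 s34 (Or.inr h3) t13 t14 t34 sne13
    · exact Gc_lemT' L P1 P2 P4 s14 s24 (Or.inr h2) t12 t14 t24 sne12
  · exact Gc_lemT' L P1 P2 P4 s14 s24 (Or.inl h1) t12 t14 t24 sne12

end Aux


/-- No mixed layout of `G_c` contains four distinct twin pairs
(with names within each pair exchanged so the smaller twin comes first) all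
realizing the ordering pattern `A < s < B < t`. -/
theorem Gc_case_AsBt (L : GcMixedLayout) (i₁ i₂ i₃ i₄ : Fin 19)
    (hne : i₁ ≠ i₂ ∧ i₁ ≠ i₃ ∧ i₁ ≠ i₄ ∧ i₂ ≠ i₃ ∧ i₂ ≠ i₄ ∧ i₃ ≠ i₄)
    (hpat : ∀ i ∈ ({i₁, i₂, i₃, i₄} : Set (Fin 19)),
      L.pos GcV.A < min (L.pos (GcV.s i)) (L.pos (GcV.t i)) ∧ min (L.pos (GcV.s i)) (L.pos (GcV.t i)) < L.pos GcV.B ∧ L.pos GcV.B < max (L.pos (GcV.s i)) (L.pos (GcV.t i))) :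
    False := by
  obtain ⟨n12, n13, n14, n23, n24, n34⟩ := hne
  obtain ⟨hA1, hB1, hC1⟩ := hpat i₁ (by simp)
  obtain ⟨hA2, hB2, hC2⟩ := hpat i₂ (by simp)
  obtain ⟨hA3, hB3, hC3⟩ := hpat i₃ (by simp)
  obtain ⟨hA4, hB4, hC4⟩ := hpat i₄ (by simp)
  obtain ⟨P1, hs1, ht1⟩ := Gc_mkPair L i₁ hA1 hB1 hC1
  obtain ⟨P2, hs2, ht2⟩ := Gc_mkPair L i₂ hA2 hB2 hC2
  obtain ⟨P3, hs3, ht3⟩ := Gc_mkPair L i₃ hA3 hB3 hC3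
  obtain ⟨P4, hs4, ht4⟩ := Gc_mkPair L i₄ hA4 hB4 hC4
  have sne12 : L.pos P1.σ ≠ L.pos P2.σ := Gc_pos_ne L (Gc_twin_ne n12 hs1 hs2)
  have sne13 : L.pos P1.σ ≠ L.pos P3.σ := Gc_pos_ne L (Gc_twin_ne n13 hs1 hs3)
  have sne14 : L.pos P1.σ ≠ L.pos P4.σ := Gc_pos_ne L (Gc_twin_ne n14 hs1 hs4)
  have sne23 : L.pos P2.σ ≠ L.pos P3.σ := Gc_pos_ne L (Gc_twin_ne n23 hs2 hs3)
  have sne24 : L.pos P2.σ ≠ L.pos P4.σ := Gc_pos_ne L (Gc_twin_ne n24 hs2 hs4)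
  have sne34 : L.pos P3.σ ≠ L.pos P4.σ := Gc_pos_ne L (Gc_twin_ne n34 hs3 hs4)
  have tne12 : L.pos P1.τ ≠ L.pos P2.τ := Gc_pos_ne L (Gc_twin_ne n12 ht1 ht2)
  have tne13 : L.pos P1.τ ≠ L.pos P3.τ := Gc_pos_ne L (Gc_twin_ne n13 ht1 ht3)
  have tne14 : L.pos P1.τ ≠ L.pos P4.τ := Gc_pos_ne L (Gc_twin_ne n14 ht1 ht4)
  have tne23 : L.pos P2.τ ≠ L.pos P3.τ := Gc_pos_ne L (Gc_twin_ne n23 ht2 ht3)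
  have tne24 : L.pos P2.τ ≠ L.pos P4.τ := Gc_pos_ne L (Gc_twin_ne n24 ht2 ht4)
  have tne34 : L.pos P3.τ ≠ L.pos P4.τ := Gc_pos_ne L (Gc_twin_ne n34 ht3 ht4)
  -- find the pair with maximal σ-position and apply `Gc_comb4`
  rcases lt_or_gt_of_ne sne12 with u12 | u12
  · rcases lt_or_gt_of_ne sne23 with u23 | u23
    · rcases lt_or_gt_of_ne sne34 with u34 | u34
      · exact Gc_comb4 L P1 P2 P3 P4 (by omega) (by omega) u34 sne12 sne13 sne23
          tne12 tne13 tne14 tne23 tne24 tne34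
      · exact Gc_comb4 L P1 P2 P4 P3 (by omega) u23 (by omega) sne12 sne14 sne24
          tne12 tne14 tne13 tne24 tne23 tne34.symm
    · rcases lt_or_gt_of_ne sne24 with u24 | u24
      · exact Gc_comb4 L P1 P2 P3 P4 (by omega) u24 (by omega) sne12 sne13 sne23
          tne12 tne13 tne14 tne23 tne24 tne34
      · exact Gc_comb4 L P1 P3 P4 P2 u12 (by omega) (by omega) sne13 sne14 sne34
          tne13 tne14 tne12 tne34 tne23.symm tne24.symm
  · rcases lt_or_gt_of_ne sne13 with u13 | u13
    · rcases lt_or_gt_of_ne sne34 with u34 | u34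
      · exact Gc_comb4 L P1 P2 P3 P4 (by omega) (by omega) u34 sne12 sne13 sne23
          tne12 tne13 tne14 tne23 tne24 tne34
      · exact Gc_comb4 L P1 P2 P4 P3 u13 (by omega) (by omega) sne12 sne14 sne24
          tne12 tne14 tne13 tne24 tne23 tne34.symm
    · rcases lt_or_gt_of_ne sne14 with u14 | u14
      · exact Gc_comb4 L P1 P2 P3 P4 u14 (by omega) (by omega) sne12 sne13 sne23
          tne12 tne13 tne14 tne23 tne24 tne34
      · exact Gc_comb4 L P2 P3 P4 P1 (by omega) (by omega) (by omega) sne23 sne24 sne34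
          tne23 tne24 tne12.symm tne34 tne13.symm tne14.symm
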